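/- (Remark 3.2, case d=1; convergence of the high-energy expansion.) There exists κ₀ > 0 such that for all κ ≥ κ₀ the matrix A(κ) is invertible and for all k, ℓ ∈ {−κ, κ} the series Σ_{m=0}^∞ C_m(k,ℓ) κ^{−m} converges absolutely with f(k,ℓ) = −(1/(2π)) Σ_{m=0}^∞ C_m(k,ℓ) κ^{−m}. -/

import Mathlib

/-! Writing `X = κ⁻¹ W(κ)`, one has `A(κ) = diag(α) (1 - X)`, and `W(κ)` is bounded uniformly in `κ`
since its entries have modulus `|α_j|⁻¹ / 2`. Hence `‖X‖ < 1` for large `κ`, `A(κ)` is invertible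
with `A(κ)⁻¹ = (∑ₘ Xᵐ) diag(α)⁻¹`, and pairing this Neumann series with the plane waves
`e^{iky}`, `e^{-iℓy}` gives `f(k,ℓ)` as `-(2π)⁻¹ ∑ₘ κ⁻ᵐ Cₘ(k,ℓ)`, absolutely convergent
because `‖Xᵐ‖ ≤ ‖X‖ᵐ`. -/

open Complex Finset Matrix

noncomputable section

/-- The matrix `A(κ)` for a one-dimensional multipoint potential:
`A(κ)_{jj} = α_j + 1/(2iκ)`, `A(κ)_{jj'} = e^{iκ|y_j - y_{j'}|}/(2iκ)` for `j ≠ j'`. -/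
def A1 (n : ℕ) (y : Fin n → ℝ) (α : Fin n → ℂ) (κ : ℝ) : Matrix (Fin n) (Fin n) ℂ :=
  fun j j' => (if j = j' then α j else 0) +
    Complex.exp (Complex.I * κ * |y j - y j'|) / (2 * Complex.I * κ)

/-- `q(k) = A(κ)⁻¹ b(k)` with `b(k)_j = -e^{i k y_j}`. -/
def q1 (n : ℕ) (y : Fin n → ℝ) (α : Fin n → ℂ) (κ k : ℝ) : Fin n → ℂ :=
  (A1 n y α κ)⁻¹ *ᵥ fun j => -Complex.exp (Complex.I * k * y j)

/-- The scattering amplitude `f(k,ℓ) = (2π)⁻¹ Σ_j q_j(k) e^{-iℓ y_j}`. -/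
def f1 (n : ℕ) (y : Fin n → ℝ) (α : Fin n → ℂ) (κ k ℓ : ℝ) : ℂ :=
  (2 * Real.pi : ℂ)⁻¹ * ∑ j, q1 n y α κ k j * Complex.exp (-Complex.I * ℓ * y j)

/-- The matrix `W(κ)` with `W(κ)_{jj'} = (i/2) α_j⁻¹ e^{iκ|y_j - y_{j'}|}`. -/
def W1 (n : ℕ) (y : Fin n → ℝ) (α : Fin n → ℂ) (κ : ℝ) : Matrix (Fin n) (Fin n) ℂ :=
  fun j j' => Complex.I / 2 * (α j)⁻¹ * Complex.exp (Complex.I * κ * |y j - y j'|)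

/-- The coefficients `C_m(k,ℓ) = Σ_{j,j'} [W(κ)^m]_{jj'} α_{j'}⁻¹ e^{i(k y_{j'} - ℓ y_j)}`. -/
def C1coef (n : ℕ) (y : Fin n → ℝ) (α : Fin n → ℂ) (κ : ℝ) (m : ℕ) (k ℓ : ℝ) : ℂ :=
  ∑ j, ∑ j', (W1 n y α κ ^ m) j j' * (α j')⁻¹ *
    Complex.exp (Complex.I * (k * y j' - ℓ * y j))

-- The `L^∞` operator norm is submultiplicative, so Neumann series converge in it.
attribute [local instance] Matrix.linftyOpNormedAddCommGroup Matrix.linftyOpNormedSpace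
  Matrix.linftyOpNormedRing Matrix.linftyOpNormedAlgebra

theorem ContinuousLinearMap.summable_norm_apply_pow_and_hasSum {𝕜 R F : Type*}
    [NontriviallyNormedField 𝕜] [NormedRing R] [NormedSpace 𝕜 R] [HasSummableGeomSeries R]
    [NormedAddCommGroup F] [NormedSpace 𝕜 F] (L : R →L[𝕜] F) {x : R} (hx : ‖x‖ < 1) :
    Summable (fun m => ‖L (x ^ m)‖) ∧ HasSum (fun m => L (x ^ m)) (L (Ring.inverse (1 - x))) :=
  ⟨.of_nonneg_of_le (fun _ => norm_nonneg _) (fun m => L.le_opNorm (x ^ m))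
      ((summable_norm_geometric_of_norm_lt_one hx).mul_left ‖L‖),
    L.hasSum (hasSum_geom_series_inverse x hx)⟩

namespace Matrix

variable {m n : Type*} [Fintype m] [Fintype n]

theorem linfty_opNorm_le_card_mul {α : Type*} [NormedAddCommGroup α] {M : Matrix m n α}
    {r : ℝ} (hr : 0 ≤ r) (h : ∀ i j, ‖M i j‖ ≤ r) : ‖M‖ ≤ Fintype.card n * r := by
  lift r to NNReal using hr
  rw [linfty_opNorm_def, ← nsmul_eq_mul, ← NNReal.coe_nsmul, NNReal.coe_le_coe]
  exact Finset.sup_le fun i _ => Finset.sum_le_card_nsmul _ _ _ fun j _ => h i j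

variable {𝕜 : Type*} [NontriviallyNormedField 𝕜] [CompleteSpace 𝕜]

def dotProductMulVecCLM (u : m → 𝕜) (v : n → 𝕜) : Matrix m n 𝕜 →L[𝕜] 𝕜 :=
  LinearMap.toContinuousLinearMap
    { toFun := fun M => u ⬝ᵥ (M *ᵥ v)
      map_add' := fun M N => by simp only [add_mulVec, dotProduct_add]
      map_smul' := fun c M => by simp only [smul_mulVec, dotProduct_smul, RingHom.id_apply] }

@[simp]
theorem dotProductMulVecCLM_apply (u : m → 𝕜) (v : n → 𝕜) (M : Matrix m n 𝕜) :
    dotProductMulVecCLM u v M = u ⬝ᵥ (M *ᵥ v) := rfl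

end Matrix

section OneDimensional

variable {n : ℕ} (y : Fin n → ℝ) (α : Fin n → ℂ) (κ : ℝ)

-- `b(k) = -planeWave y k`
def planeWave (k : ℝ) : Fin n → ℂ := fun j => Complex.exp (Complex.I * k * y j)

theorem norm_W1_apply (i j : Fin n) : ‖W1 n y α κ i j‖ = ‖α i‖⁻¹ / 2 := by
  simp [W1, Complex.norm_exp, div_eq_inv_mul]

theorem norm_W1_le : ‖W1 n y α κ‖ ≤ n * ∑ i, ‖α i‖⁻¹ := by
  have hsum : ∀ i, ‖α i‖⁻¹ ≤ ∑ i, ‖α i‖⁻¹ := fun i =>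
    Finset.single_le_sum (fun i _ => inv_nonneg.2 (norm_nonneg (α i))) (Finset.mem_univ i)
  simpa using Matrix.linfty_opNorm_le_card_mul
    (Finset.sum_nonneg fun i _ => inv_nonneg.2 (norm_nonneg (α i)))
    fun i j => (norm_W1_apply y α κ i j).trans_le <|
      (half_le_self (inv_nonneg.2 (norm_nonneg _))).trans (hsum i)

theorem norm_inv_smul_W1_lt_one (hκ : n * ∑ i, ‖α i‖⁻¹ < κ) :
    ‖(κ : ℂ)⁻¹ • W1 n y α κ‖ < 1 := by
  have hκ0 : 0 < κ := lt_of_le_of_lt (by positivity) hκ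
  rw [norm_smul, norm_inv, Complex.norm_real, Real.norm_of_nonneg hκ0.le, inv_mul_lt_iff₀ hκ0]
  linarith [norm_W1_le y α κ]

theorem A1_eq_diagonal_mul (hα : ∀ j, α j ≠ 0) (hκ : κ ≠ 0) :
    A1 n y α κ = diagonal α * (1 - (κ : ℂ)⁻¹ • W1 n y α κ) := by
  ext j j'
  have hαj := hα j
  have hκ' : (κ : ℂ) ≠ 0 := by exact_mod_cast hκ
  rw [diagonal_mul]
  simp only [A1, W1, Matrix.sub_apply, Matrix.one_apply, Matrix.smul_apply, smul_eq_mul]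
  split_ifs <;> field_simp <;>
    linear_combination Complex.exp (Complex.I * κ * |y j - y j'|) * Complex.I_mul_I

theorem C1coef_div_pow (m : ℕ) (k ℓ : ℝ) :
    C1coef n y α κ m k ℓ / (κ : ℂ) ^ m =
      planeWave y (-ℓ) ⬝ᵥ (((κ : ℂ)⁻¹ • W1 n y α κ) ^ m *ᵥ (α⁻¹ * planeWave y k)) := by
  simp only [C1coef, dotProduct, mulVec, planeWave, smul_pow, Matrix.smul_apply, smul_eq_mul,
    Pi.mul_apply, Pi.inv_apply, Finset.mul_sum, Finset.sum_div]
  refine Finset.sum_congr rfl fun j _ => Finset.sum_congr rfl fun j' _ => ?_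
  rw [show Complex.I * (k * y j' - ℓ * y j) = Complex.I * ↑(-ℓ) * y j + Complex.I * k * y j' by
    push_cast; ring, Complex.exp_add]
  ring

theorem f1_eq_of_A1_eq_diagonal_mul (hα : ∀ j, α j ≠ 0) {B : Matrix (Fin n) (Fin n) ℂ}
    (hA : A1 n y α κ = diagonal α * B) (k ℓ : ℝ) :
    f1 n y α κ k ℓ =
      -(2 * Real.pi : ℂ)⁻¹ * (planeWave y (-ℓ) ⬝ᵥ (B⁻¹ *ᵥ (α⁻¹ * planeWave y k))) := by
  have hDinv : (diagonal α)⁻¹ = diagonal α⁻¹ := inv_eq_right_inv <| by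
    rw [diagonal_mul_diagonal, ← diagonal_one]
    exact congrArg diagonal (funext fun j => mul_inv_cancel₀ (hα j))
  have hq : q1 n y α κ k = -(B⁻¹ *ᵥ (α⁻¹ * planeWave y k)) := by
    rw [q1, show (fun j => -Complex.exp (Complex.I * k * y j)) = -planeWave y k from rfl, hA,
      Matrix.mul_inv_rev, hDinv, ← mulVec_mulVec, mulVec_neg,
      show diagonal α⁻¹ *ᵥ planeWave y k = α⁻¹ * planeWave y k from
        funext (mulVec_diagonal _ _), mulVec_neg]
  have hu : (fun j => Complex.exp (-Complex.I * ℓ * y j)) = planeWave y (-ℓ) := by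
    ext j
    simp only [planeWave, Complex.ofReal_neg, mul_neg, neg_mul]
  rw [f1, show ∑ j, q1 n y α κ k j * Complex.exp (-Complex.I * ℓ * y j) =
    q1 n y α κ k ⬝ᵥ planeWave y (-ℓ) by rw [← hu]; rfl, hq, dotProduct_comm, dotProduct_neg]
  ring

end OneDimensional

theorem stmt11_general (n : ℕ) (y : Fin n → ℝ) (α : Fin n → ℂ)
    (hα : ∀ j, α j ≠ 0) :
    ∃ κ₀ > (0 : ℝ), ∀ κ ≥ κ₀, IsUnit (A1 n y α κ) ∧
      ∀ k ℓ : ℝ, (k = κ ∨ k = -κ) → (ℓ = κ ∨ ℓ = -κ) →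
        Summable (fun m : ℕ => ‖C1coef n y α κ m k ℓ / (κ : ℂ) ^ m‖) ∧
        f1 n y α κ k ℓ =
          -(2 * Real.pi : ℂ)⁻¹ * ∑' m : ℕ, C1coef n y α κ m k ℓ / (κ : ℂ) ^ m := by
  refine ⟨n * ∑ i, ‖α i‖⁻¹ + 1, by positivity, fun κ hκ => ?_⟩
  have hκ0 : 0 < κ := lt_of_lt_of_le (by positivity) hκ
  have hX := norm_inv_smul_W1_lt_one y α κ (by linarith)
  have hA := A1_eq_diagonal_mul y α κ hα hκ0.ne'
  refine ⟨hA ▸ (isUnit_diagonal.2 (Pi.isUnit_iff.2 fun j => (hα j).isUnit)).mul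
    (isUnit_one_sub_of_norm_lt_one hX), fun k ℓ _ _ => ?_⟩
  simp only [C1coef_div_pow, ← dotProductMulVecCLM_apply]
  obtain ⟨hsummable, hhasSum⟩ := (dotProductMulVecCLM (planeWave y (-ℓ))
    (α⁻¹ * planeWave y k)).summable_norm_apply_pow_and_hasSum hX
  refine ⟨hsummable, ?_⟩
  rw [f1_eq_of_A1_eq_diagonal_mul y α κ hα hA, nonsing_inv_eq_ringInverse]
  exact congrArg _ hhasSum.tsum_eq.symm

/-- Remark 3.2, case d = 1: convergence of the high-energy expansion. -/
theorem stmt11 (n : ℕ) (y : Fin n → ℝ) (α : Fin n → ℂ)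
    (hy : Function.Injective y) (hα : ∀ j, α j ≠ 0) :
    ∃ κ₀ > (0 : ℝ), ∀ κ ≥ κ₀, IsUnit (A1 n y α κ) ∧
      ∀ k ℓ : ℝ, (k = κ ∨ k = -κ) → (ℓ = κ ∨ ℓ = -κ) →
        Summable (fun m : ℕ => ‖C1coef n y α κ m k ℓ / (κ : ℂ) ^ m‖) ∧
        f1 n y α κ k ℓ =
          -(2 * Real.pi : ℂ)⁻¹ * ∑' m : ℕ, C1coef n y α κ m k ℓ / (κ : ℂ) ^ m :=
  stmt11_general n y α hα
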